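/- arXiv:2309.04673 — 2 statements merged into one kernel-verified Lean document; each statement's English description precedes it below -/
import Mathlib

section
/- Let C be a nonempty open non-degenerate convex cone in V = ℝⁿ and let L be a lattice in V (a discrete additive subgroup that spans V over ℝ, free of rank n). Then conv(C ∩ L) + C̄ = conv(C ∩ L), and every extreme point of conv(C ∩ L) belongs to C ∩ L. -/
open Set Pointwise

noncomputable section

/-- `V = ℝⁿ`. -/
abbrev EV (n : ℕ) : Type := Fin n → ℝ

/-- The rational points `V(ℚ) = ℚⁿ` of `ℝⁿ`. -/
def ratPts (n : ℕ) : Set (EV n) := {x | ∀ i, ∃ q : ℚ, x i = (q : ℝ)}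

/-- A convex cone: a convex set closed under positive scalar multiplication. -/
def IsConvexCone {M : Type*} [AddCommGroup M] [Module ℝ M] (C : Set M) : Prop :=
  Convex ℝ C ∧ ∀ x ∈ C, ∀ t : ℝ, 0 < t → t • x ∈ C

/-- A polyhedral cone: the set of nonnegative linear combinations of finitely many vectors. -/
def IsPolyCone {M : Type*} [AddCommGroup M] [Module ℝ M] (P : Set M) : Prop :=
  ∃ (k : ℕ) (v : Fin k → M),
    P = {x | ∃ c : Fin k → ℝ, (∀ i, 0 ≤ c i) ∧ x = ∑ i, c i • v i}

/-- A rational polyhedral cone with respect to a set `Q` of "rational points":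
a cone generated by finitely many vectors belonging to `Q`. -/
def IsRatPolyCone {M : Type*} [AddCommGroup M] [Module ℝ M] (Q P : Set M) : Prop :=
  ∃ (k : ℕ) (v : Fin k → M), (∀ i, v i ∈ Q) ∧
    P = {x | ∃ c : Fin k → ℝ, (∀ i, 0 ≤ c i) ∧ x = ∑ i, c i • v i}

/-- A lattice in `ℝⁿ`: the ℤ-span of an ℝ-basis (hence free of rank `n`, spanning `V`). -/
def IsLattice (n : ℕ) (L : AddSubgroup (EV n)) : Prop :=
  ∃ b : Module.Basis (Fin n) ℝ (EV n), (∀ i, b i ∈ L) ∧ L = AddSubgroup.closure (Set.range b)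

/-- `C₊ := conv(C̄ ∩ ℚⁿ)`, the convex hull of the rational points of the closure of `C`. -/
def plusPart (n : ℕ) (C : Set (EV n)) : Set (EV n) :=
  convexHull ℝ (closure C ∩ ratPts n)

/-- Non-degeneracy: the closure of `C` contains no nonzero vector subspace. -/
def NonDegen {M : Type*} [AddCommGroup M] [Module ℝ M] [TopologicalSpace M] (C : Set M) : Prop :=
  ∀ U : Submodule ℝ M, (U : Set M) ⊆ closure C → U = ⊥

set_option maxHeartbeats 1000000


lemma cone_add_mem {n : ℕ} {C : Set (EV n)} (hcone : IsConvexCone C)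
    {x y : EV n} (hx : x ∈ C) (hy : y ∈ C) : x + y ∈ C := by
  have h := hcone.1 hx hy (by norm_num : (0:ℝ) ≤ 1/2) (by norm_num : (0:ℝ) ≤ 1/2) (by norm_num)
  have h2 := hcone.2 _ h 2 (by norm_num)
  have : (2:ℝ) • ((1/2 : ℝ) • x + (1/2 : ℝ) • y) = x + y := by
    rw [smul_add, smul_smul, smul_smul]; norm_num
  rwa [this] at h2

lemma smul_mem_closure_cone {n : ℕ} {C : Set (EV n)} (hcone : IsConvexCone C)
    {y : EV n} (hy : y ∈ closure C) {t : ℝ} (ht : 0 < t) : t • y ∈ closure C := by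
  have h1 : (fun v : EV n => t • v) '' closure C ⊆ closure ((fun v : EV n => t • v) '' C) :=
    image_closure_subset_closure_image (continuous_const_smul t)
  have h2 : (fun v : EV n => t • v) '' C ⊆ C := by
    rintro _ ⟨v, hv, rfl⟩; exact hcone.2 v hv t ht
  exact closure_mono h2 (h1 ⟨y, hy, rfl⟩)

lemma open_cone_add_closure {n : ℕ} {C : Set (EV n)} (hopen : IsOpen C)
    (hcone : IsConvexCone C) {x y : EV n} (hx : x ∈ C) (hy : y ∈ closure C) :
    x + y ∈ C := by
  obtain ⟨ε, hε, hball⟩ := Metric.isOpen_iff.1 hopen x hx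
  obtain ⟨y', hy'C, hy'd⟩ := Metric.mem_closure_iff.1 hy ε hε
  have h1 : x + (y - y') ∈ C := by
    apply hball
    simp only [Metric.mem_ball, dist_eq_norm]
    simpa [dist_eq_norm, norm_sub_rev] using hy'd
  have := cone_add_mem hcone h1 hy'C
  have he : x + (y - y') + y' = x + y := by abel
  rwa [he] at this

lemma lattice_near {n : ℕ} (b : Module.Basis (Fin n) ℝ (EV n)) (L : AddSubgroup (EV n))
    (hbL : ∀ i, b i ∈ L) :
    ∃ D : ℝ, 0 < D ∧ ∀ w : EV n, ∃ l ∈ L, ‖w - l‖ ≤ D := by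
  refine ⟨∑ i, ‖b i‖ + 1, by positivity, fun w => ?_⟩
  refine ⟨∑ i, (⌊b.repr w i⌋ : ℤ) • b i, AddSubgroup.sum_mem _ fun i _ =>
    AddSubgroup.zsmul_mem _ (hbL i) _, ?_⟩
  have hw : w = ∑ i, (b.repr w i) • b i := (b.sum_repr w).symm
  have : w - ∑ i, (⌊b.repr w i⌋ : ℤ) • b i = ∑ i, Int.fract (b.repr w i) • b i := by
    conv_lhs => rw [hw]
    rw [← Finset.sum_sub_distrib]
    apply Finset.sum_congr rfl
    intro i _
    rw [← Int.cast_smul_eq_zsmul ℝ, ← sub_smul, Int.fract, ← hw]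
  rw [this]
  calc ‖∑ i, Int.fract (b.repr w i) • b i‖ ≤ ∑ i, ‖Int.fract (b.repr w i) • b i‖ :=
        norm_sum_le _ _
    _ ≤ ∑ i, ‖b i‖ := by
        apply Finset.sum_le_sum; intro i _
        rw [norm_smul, Real.norm_eq_abs, abs_of_nonneg (Int.fract_nonneg _)]
        exact mul_le_of_le_one_left (norm_nonneg _) (Int.fract_lt_one _).le
    _ ≤ ∑ i, ‖b i‖ + 1 := by linarith

lemma exists_large_near {n : ℕ} {L : AddSubgroup (EV n)} {D : ℝ} (hD : 0 < D)
    (hnear : ∀ w : EV n, ∃ l ∈ L, ‖w - l‖ ≤ D) (y : EV n) :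
    ∀ δ : ℝ, 0 < δ → ∀ T₀ : ℝ, 0 < T₀ → ∃ T : ℝ, T₀ ≤ T ∧ ∃ l ∈ L, ‖l - T • y‖ < δ := by
  intro δ hδ T₀ hT₀
  choose l hlL hld using fun k : ℕ => hnear (((k : ℝ) * T₀) • y)
  set v : ℕ → EV n := fun k => ((k : ℝ) * T₀) • y - l k with hv
  have hvmem : ∀ k, v k ∈ Metric.closedBall (0 : EV n) D := by
    intro k; simpa [hv, Metric.mem_closedBall, dist_eq_norm] using hld k
  obtain ⟨a, -, φ, hφ, hconv⟩ :=
    tendsto_subseq_of_bounded Metric.isBounded_closedBall hvmem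
  have hc : ∃ N : ℕ, dist (v (φ (N+1))) a < δ/2 ∧ dist (v (φ N)) a < δ/2 := by
    have := Metric.tendsto_atTop.1 hconv (δ/2) (by linarith)
    obtain ⟨N, hN⟩ := this
    exact ⟨N, hN (N+1) (by omega), hN N le_rfl⟩
  obtain ⟨N, h1, h2⟩ := hc
  have hlt : φ N < φ (N + 1) := hφ (by omega)
  refine ⟨((φ (N+1) : ℝ) - (φ N : ℝ)) * T₀, ?_, l (φ (N+1)) - l (φ N),
    AddSubgroup.sub_mem _ (hlL _) (hlL _), ?_⟩
  · have : (1 : ℝ) ≤ (φ (N+1) : ℝ) - (φ N : ℝ) := by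
      have : φ N + 1 ≤ φ (N+1) := hlt
      have := Nat.cast_le (α := ℝ).2 this
      push_cast at this ⊢; linarith
    nlinarith
  · have he : l (φ (N+1)) - l (φ N) - (((φ (N+1) : ℝ) - (φ N : ℝ)) * T₀) • y
        = v (φ N) - v (φ (N+1)) := by
      simp only [hv]
      rw [sub_mul, sub_smul]
      abel
    rw [he]
    have htri := dist_triangle (v (φ N)) a (v (φ (N+1)))
    rw [← dist_eq_norm]
    rw [dist_comm a (v (φ (N+1)))] at htri
    linarith

lemma core_mem {n : ℕ} {C : Set (EV n)} (hopen : IsOpen C) (hcone : IsConvexCone C)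
    {L : AddSubgroup (EV n)} (b : Module.Basis (Fin n) ℝ (EV n)) (hbL : ∀ i, b i ∈ L)
    {x y : EV n} (hx : x ∈ C ∩ (L : Set (EV n))) (hy : y ∈ closure C) :
    x + y ∈ convexHull ℝ (C ∩ (L : Set (EV n))) := by
  rcases eq_or_ne y 0 with rfl | hy0
  · simpa using subset_convexHull ℝ _ hx
  obtain ⟨D, hD, hnear⟩ := lattice_near b L hbL
  obtain ⟨ε, hε, hball⟩ := Metric.isOpen_iff.1 hopen x hx.1
  -- the subgroup H = L + ℝ y and its closure G
  set H : AddSubgroup (EV n) := L ⊔ (Submodule.span ℝ {y}).toAddSubgroup with hH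
  set G : AddSubgroup (EV n) := H.topologicalClosure with hG
  have hGclosed : IsClosed (G : Set (EV n)) := AddSubgroup.isClosed_topologicalClosure H
  have hGcl : (G : Set (EV n)) = closure (H : Set (EV n)) := rfl
  have hmemH : ∀ l ∈ L, ∀ t : ℝ, l + t • y ∈ H := by
    intro l hl t
    exact AddSubgroup.mem_sup.2 ⟨l, hl, t • y,
      Submodule.mem_toAddSubgroup _ |>.2 (Submodule.mem_span_singleton.2 ⟨t, rfl⟩), rfl⟩
  have hmemH' : ∀ h ∈ H, ∃ l ∈ L, ∃ t : ℝ, h = l + t • y := by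
    intro h hh
    obtain ⟨l, hl, w, hw, rfl⟩ := AddSubgroup.mem_sup.1 hh
    obtain ⟨t, rfl⟩ := Submodule.mem_span_singleton.1 (Submodule.mem_toAddSubgroup _ |>.1 hw)
    exact ⟨l, hl, t, rfl⟩
  -- spans of small elements of G
  set V : ℝ → Submodule ℝ (EV n) := fun r => Submodule.span ℝ ((G : Set (EV n)) ∩ Metric.ball 0 r)
    with hV
  have hVmono : ∀ r r' : ℝ, r ≤ r' → V r ≤ V r' := by
    intro r r' h
    exact Submodule.span_mono (inter_subset_inter_right _ (Metric.ball_subset_ball h))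
  -- minimal rank scale
  set f : ℕ → ℕ := fun k => Module.finrank ℝ (V (ε / (k+1))) with hf
  obtain ⟨k₀, hk₀⟩ : ∃ k₀ : ℕ, f k₀ = sInf (Set.range f) :=
    Set.mem_range.1 (Nat.sInf_mem (Set.range_nonempty f))
  set r₀ : ℝ := ε / (k₀ + 1) with hr₀
  have hr₀pos : 0 < r₀ := by positivity
  have hr₀ε : r₀ ≤ ε := by
    rw [hr₀, div_le_iff₀ (by positivity)]
    nlinarith [Nat.cast_nonneg (α := ℝ) k₀]
  set W : Submodule ℝ (EV n) := V r₀ with hW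
  -- stabilization
  have hstab : ∀ r : ℝ, 0 < r → r ≤ r₀ → V r = W := by
    intro r hr hrr₀
    obtain ⟨k, hk⟩ : ∃ k : ℕ, ε / (k+1) ≤ r := by
      obtain ⟨k, hk⟩ := exists_nat_gt (ε / r)
      refine ⟨k, ?_⟩
      rw [div_le_iff₀ (by positivity)]
      rw [div_lt_iff₀ hr] at hk
      nlinarith
    have h1 : V (ε / (k+1)) ≤ V r := hVmono _ _ hk
    have h2 : V r ≤ W := hVmono _ _ hrr₀
    have h3 : Module.finrank ℝ W ≤ Module.finrank ℝ (V r) := by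
      have : f k₀ ≤ f k := by rw [hk₀]; exact Nat.sInf_le (Set.mem_range_self k)
      have h4 : Module.finrank ℝ (V (ε/(k+1))) ≤ Module.finrank ℝ (V r) :=
        Submodule.finrank_mono h1
      calc Module.finrank ℝ W = f k₀ := rfl
        _ ≤ f k := this
        _ ≤ _ := h4
    exact Submodule.eq_of_le_of_finrank_le h2 h3
  -- y ∈ W
  have hyW : y ∈ W := by
    have hy0' : 0 < ‖y‖ := norm_pos_iff.2 hy0
    have ht : (r₀ / (2 * ‖y‖)) • y ∈ (G : Set (EV n)) ∩ Metric.ball 0 r₀ := by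
      constructor
      · exact H.le_topologicalClosure (by simpa using hmemH 0 L.zero_mem (r₀ / (2 * ‖y‖)))
      · simp only [Metric.mem_ball, dist_zero_right, norm_smul, Real.norm_eq_abs]
        rw [abs_of_pos (div_pos hr₀pos (by positivity))]
        rw [div_mul_eq_mul_div, div_lt_iff₀ (by positivity)]
        nlinarith
    have := Submodule.subset_span (R := ℝ) ht
    have h2 : (r₀ / (2 * ‖y‖))⁻¹ • ((r₀ / (2 * ‖y‖)) • y) ∈ W :=
      Submodule.smul_mem _ _ this
    rwa [inv_smul_smul₀ (div_pos hr₀pos (by positivity)).ne'] at h2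
  -- W ⊆ G
  have hWG : (W : Set (EV n)) ⊆ (G : Set (EV n)) := by
    intro v hv
    rw [← hGclosed.closure_eq]
    rw [Metric.mem_closure_iff]
    intro δ hδ
    set r : ℝ := min (δ / (n + 1)) r₀ with hr
    have hrpos : 0 < r := lt_min (by positivity) hr₀pos
    have hvr : v ∈ V r := by rw [hstab r hrpos (min_le_right _ _)]; exact hv
    obtain ⟨s, hsS, hspan, hsli⟩ := exists_linearIndependent ℝ ((G : Set (EV n)) ∩ Metric.ball 0 r)
    have hsfin : s.Finite := hsli.setFinite
    have hvs : v ∈ Submodule.span ℝ s := by rw [hspan]; exact hvr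
    rw [← hsfin.coe_toFinset, Submodule.mem_span_finset] at hvs
    obtain ⟨c, -, hc⟩ := hvs
    set g : EV n := ∑ u ∈ hsfin.toFinset, (round (c u) : ℤ) • u with hg
    have hgG : g ∈ (G : Set (EV n)) := by
      apply AddSubgroup.sum_mem
      intro u hu
      exact AddSubgroup.zsmul_mem _ ((hsS (hsfin.mem_toFinset.1 hu)).1) _
    refine ⟨g, hgG, ?_⟩
    have hcard : hsfin.toFinset.card ≤ n := by
      haveI := hsfin.fintype
      have h1 := hsli.fintype_card_le_finrank
      rw [Module.finrank_fin_fun] at h1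
      rw [Set.Finite.card_toFinset]
      exact h1
    have hbound : dist v g < δ := by
      rw [dist_eq_norm, ← hc, hg, ← Finset.sum_sub_distrib]
      have hterm : ∀ u ∈ hsfin.toFinset, ‖c u • u - round (c u) • u‖ ≤ r / 2 := by
        intro u hu
        have huball : ‖u‖ < r := by
          have := (hsS (hsfin.mem_toFinset.1 hu)).2
          simpa [Metric.mem_ball, dist_zero_right] using this
        rw [← Int.cast_smul_eq_zsmul ℝ, ← sub_smul, norm_smul, Real.norm_eq_abs]
        have h1 : |c u - (round (c u) : ℝ)| ≤ 1/2 := abs_sub_round (c u)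
        nlinarith [norm_nonneg u, abs_nonneg (c u - (round (c u):ℝ))]
      have hrle : r ≤ δ / (n + 1) := min_le_left _ _
      have hcast : (hsfin.toFinset.card : ℝ) ≤ (n : ℝ) := Nat.cast_le.2 hcard
      calc ‖∑ u ∈ hsfin.toFinset, (c u • u - round (c u) • u)‖
          ≤ ∑ u ∈ hsfin.toFinset, ‖c u • u - round (c u) • u‖ := norm_sum_le _ _
        _ ≤ ∑ _u ∈ hsfin.toFinset, r / 2 := Finset.sum_le_sum hterm
        _ = (hsfin.toFinset.card : ℝ) * (r / 2) := by
            rw [Finset.sum_const, nsmul_eq_mul]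
        _ < δ := by
            have hn1 : (0:ℝ) < (n:ℝ) + 1 := by positivity
            rw [le_div_iff₀ hn1] at hrle
            nlinarith [Nat.cast_nonneg (α := ℝ) hsfin.toFinset.card,
              Nat.cast_nonneg (α := ℝ) n, mul_le_mul_of_nonneg_right hcast hrpos.le]
    exact hbound
  -- the approximation set E
  set E : Set (EV n) := {e | ∃ l ∈ L, ∃ T : ℝ, 1 ≤ T ∧ e = l - T • y ∧ ‖e‖ < r₀} with hE
  have hEW : E ⊆ (W : Set (EV n)) := by
    rintro e ⟨l, hl, T, hT, rfl, hnorm⟩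
    have h1 : l - T • y ∈ H := by
      have := hmemH l hl (-T)
      simpa [sub_eq_add_neg, neg_smul] using this
    have h2 : l - T • y ∈ (G : Set (EV n)) ∩ Metric.ball 0 r₀ :=
      ⟨H.le_topologicalClosure h1, by simpa [Metric.mem_ball, dist_zero_right] using hnorm⟩
    exact Submodule.subset_span h2
  -- E approximates small elements of W
  have hEdense : ∀ v ∈ (W : Set (EV n)), ‖v‖ < r₀ / 2 → ∀ δ : ℝ, 0 < δ →
      ∃ e ∈ E, ‖e - v‖ < δ := by
    intro v hvW hvn δ hδ
    set δ' : ℝ := min δ (r₀ / 2) with hδ'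
    have hδ'pos : 0 < δ' := lt_min hδ (by positivity)
    have hvG : v ∈ closure (H : Set (EV n)) := hWG hvW
    obtain ⟨h, hhH, hhd⟩ := Metric.mem_closure_iff.1 hvG (δ'/2) (by positivity)
    obtain ⟨l, hl, t, rfl⟩ := hmemH' h hhH
    obtain ⟨S, hS, l₂, hl₂, hl₂n⟩ :=
      exists_large_near hD hnear y (δ'/2) (by positivity) (|t| + 1) (by positivity)
    refine ⟨(l + l₂) - (S - t) • y, ⟨l + l₂, AddSubgroup.add_mem _ hl hl₂, S - t, ?_, rfl, ?_⟩, ?_⟩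
    · have : t ≤ |t| := le_abs_self t
      linarith
    · -- norm bound : ‖(l + l₂) - (S - t) • y‖ < r₀
      have he : (l + l₂) - (S - t) • y = ((l + t • y) - v) + (l₂ - S • y) + v := by
        rw [sub_smul]; abel
      rw [he]
      have hd1 : ‖(l + t • y) - v‖ < δ'/2 := by
        rw [← dist_eq_norm, dist_comm]; exact hhd
      calc ‖((l + t • y) - v) + (l₂ - S • y) + v‖
          ≤ ‖((l + t • y) - v) + (l₂ - S • y)‖ + ‖v‖ := norm_add_le _ _
        _ ≤ ‖(l + t • y) - v‖ + ‖l₂ - S • y‖ + ‖v‖ := by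
            have := norm_add_le ((l + t • y) - v) (l₂ - S • y); linarith
        _ < r₀ := by
            have hδ'2 : δ' ≤ r₀ / 2 := min_le_right _ _
            linarith
    · have he : (l + l₂) - (S - t) • y - v = ((l + t • y) - v) + (l₂ - S • y) := by
        rw [sub_smul]; abel
      rw [he]
      have hd1 : ‖(l + t • y) - v‖ < δ'/2 := by
        rw [← dist_eq_norm, dist_comm]; exact hhd
      have hδ'δ : δ' ≤ δ := min_le_left _ _
      calc ‖((l + t • y) - v) + (l₂ - S • y)‖
          ≤ ‖(l + t • y) - v‖ + ‖l₂ - S • y‖ := norm_add_le _ _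
        _ < δ := by linarith
  -- pass to the subspace W
  set Ehat : Set W := {w : W | (w : EV n) ∈ E} with hEhat
  have hballE : Metric.ball (0 : W) (r₀/2) ⊆ closure Ehat := by
    intro w hw
    rw [Metric.mem_closure_iff]
    intro δ hδ
    have hwn : ‖(w : EV n)‖ < r₀/2 := by
      have := Metric.mem_ball.1 hw
      rwa [dist_zero_right] at this
    obtain ⟨e, heE, hed⟩ := hEdense w w.2 hwn δ hδ
    refine ⟨⟨e, hEW heE⟩, heE, ?_⟩
    rw [Subtype.dist_eq, dist_comm]
    simpa [dist_eq_norm] using hed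
  have hcl2 : Metric.ball (0 : W) (r₀/2) ⊆ closure (convexHull ℝ Ehat) :=
    hballE.trans (closure_mono (subset_convexHull ℝ _))
  have haff : affineSpan ℝ Ehat = ⊤ := by
    have h2 : convexHull ℝ Ehat ⊆ (affineSpan ℝ Ehat : Set W) := by
      rw [← affineSpan_convexHull]
      exact subset_affineSpan ℝ _
    have h1 : closure (convexHull ℝ Ehat) ⊆ (affineSpan ℝ Ehat : Set W) :=
      (AffineSubspace.closed_of_finiteDimensional _).closure_subset_iff.2 h2
    rw [eq_top_iff]
    calc (⊤ : AffineSubspace ℝ W)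
        = affineSpan ℝ (Metric.ball (0 : W) (r₀/2)) :=
          (Metric.isOpen_ball.affineSpan_eq_top ⟨0, by simp [Metric.mem_ball]; positivity⟩).symm
      _ ≤ affineSpan ℝ (affineSpan ℝ Ehat : Set W) :=
          affineSpan_mono ℝ (hcl2.trans h1)
      _ = affineSpan ℝ Ehat := AffineSubspace.affineSpan_coe _
  obtain ⟨w₀, hw₀⟩ := interior_convexHull_nonempty_iff_affineSpan_eq_top.2 haff
  have h0 : (0 : W) ∈ convexHull ℝ Ehat := by
    rcases eq_or_ne w₀ 0 with rfl | hw0ne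
    · exact interior_subset hw₀
    · set sc : ℝ := (r₀/4) / ‖w₀‖ with hsc
      have hscpos : 0 < sc := div_pos (by positivity) (norm_pos_iff.2 hw0ne)
      have hu : -sc • w₀ ∈ closure (convexHull ℝ Ehat) := by
        apply hcl2
        have hcoe : ‖(-sc) • w₀‖ = ‖(-sc) • (w₀ : EV n)‖ := rfl
        have hw0c : ‖w₀‖ = ‖(w₀ : EV n)‖ := rfl
        rw [Metric.mem_ball, dist_zero_right, hcoe, norm_smul, Real.norm_eq_abs, abs_neg,
          abs_of_pos hscpos, hsc, ← hw0c, div_mul_cancel₀]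
        · linarith
        · exact (norm_pos_iff.2 hw0ne).ne'
      have hseg : (0 : W) ∈ openSegment ℝ w₀ (-sc • w₀) := by
        refine ⟨sc/(1+sc), 1/(1+sc), by positivity, by positivity, ?_, ?_⟩
        · field_simp; ring
        · rw [smul_smul]
          rw [← add_smul]
          convert zero_smul ℝ w₀ using 2
          field_simp; ring
      have := (convex_convexHull ℝ Ehat).openSegment_interior_closure_subset_interior hw₀ hu hseg
      exact interior_subset this
  have h0E : (0 : EV n) ∈ convexHull ℝ E := by
    have himg := W.subtype.image_convexHull Ehat
    have hsub : (W.subtype '' Ehat) ⊆ E := by rintro _ ⟨w, hw, rfl⟩; exact hw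
    have h1 : (0 : EV n) ∈ convexHull ℝ (W.subtype '' Ehat) := by
      rw [← himg]
      exact ⟨0, h0, rfl⟩
    exact convexHull_mono hsub h1
  -- extract a finite convex combination
  rw [convexHull_eq] at h0E
  obtain ⟨ι, t, ν, zf, hν0, hν1, hzE, hcm⟩ := h0E
  rw [Finset.centerMass_eq_of_sum_1 _ _ hν1] at hcm
  have hchoice : ∀ i : {i // i ∈ t}, ∃ l ∈ L, ∃ T : ℝ, 1 ≤ T ∧ zf ↑i = l - T • y ∧ ‖zf ↑i‖ < r₀ :=
    fun i => hzE ↑i i.2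
  choose lf hlfL Tf hTf1 hzeq hznorm using hchoice
  set A : ℝ := ∑ i ∈ t.attach, ν ↑i * Tf i with hA
  have hν1' : ∑ i ∈ t.attach, ν ↑i = 1 := by rw [Finset.sum_attach]; exact hν1
  have hA1 : 1 ≤ A := by
    rw [hA, ← hν1']
    apply Finset.sum_le_sum
    intro i _
    have h0 : 0 ≤ ν ↑i := hν0 ↑i i.2
    nlinarith [hTf1 i]
  have hApos : 0 < A := lt_of_lt_of_le one_pos hA1
  set Q : EV n := ∑ i ∈ t.attach, ν ↑i • (x + lf i) with hQ
  have hQmem : Q ∈ convexHull ℝ (C ∩ (L : Set (EV n))) := by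
    rw [hQ]
    have hpt : ∀ i ∈ t.attach, x + lf i ∈ convexHull ℝ (C ∩ (L : Set (EV n))) := by
      intro i _
      apply subset_convexHull
      constructor
      · have hl : x + lf i = (x + zf ↑i) + Tf i • y := by
          rw [hzeq i]; abel
        rw [hl]
        apply open_cone_add_closure hopen hcone
        · apply hball
          rw [Metric.mem_ball, dist_eq_norm]
          have : x + zf ↑i - x = zf ↑i := by abel
          rw [this]
          exact lt_of_lt_of_le (hznorm i) hr₀ε
        · exact smul_mem_closure_cone hcone hy (lt_of_lt_of_le one_pos (hTf1 i))
      · exact AddSubgroup.add_mem _ hx.2 (hlfL i)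
    exact (convex_convexHull ℝ _).sum_mem (fun i _ => hν0 ↑i i.2) hν1' hpt
  have hQy : Q = x + A • y := by
    rw [hQ]
    have hlf : ∀ i : {i // i ∈ t}, lf i = zf ↑i + Tf i • y := by
      intro i; rw [hzeq i]; abel
    calc ∑ i ∈ t.attach, ν ↑i • (x + lf i)
        = (∑ i ∈ t.attach, ν ↑i) • x + ∑ i ∈ t.attach, ν ↑i • lf i := by
          rw [Finset.sum_smul, ← Finset.sum_add_distrib]
          congr 1; ext i; rw [smul_add]
      _ = x + (∑ i ∈ t.attach, ν ↑i • zf ↑i + (∑ i ∈ t.attach, ν ↑i * Tf i) • y) := by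
          rw [hν1', one_smul]
          congr 1
          rw [Finset.sum_smul, ← Finset.sum_add_distrib]
          apply Finset.sum_congr rfl
          intro i _
          rw [hlf i, smul_add, mul_smul]
      _ = x + A • y := by
          rw [← hA]
          congr 1
          have h0 : ∑ i ∈ t.attach, ν ↑i • zf ↑i = 0 := by
            rw [Finset.sum_attach t (fun i => ν i • zf i)]; exact hcm
          rw [h0, zero_add]
  have hfinal : x + y = (1 - 1/A) • x + (1/A) • Q := by
    rw [hQy, smul_add, smul_smul, sub_smul, one_smul, one_div,
      inv_mul_cancel₀ hApos.ne', one_smul]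
    abel
  rw [hfinal]
  exact (convex_convexHull ℝ _) (subset_convexHull ℝ _ hx) hQmem
    (by rw [sub_nonneg, div_le_one hApos]; exact hA1)
    (by positivity) (by ring)

/-- For a nonempty open non-degenerate convex cone `C ⊆ ℝⁿ` and a
lattice `L`, we have `conv(C ∩ L) + C̄ = conv(C ∩ L)`, and every extreme point of
`conv(C ∩ L)` belongs to `C ∩ L`. -/
theorem statement4 {n : ℕ}
    (C : Set (EV n)) (hne : C.Nonempty) (hopen : IsOpen C)
    (hcone : IsConvexCone C) (hnd : NonDegen C)
    (L : AddSubgroup (EV n)) (hlat : IsLattice n L) :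
    convexHull ℝ (C ∩ (L : Set (EV n))) + closure C = convexHull ℝ (C ∩ (L : Set (EV n))) ∧
    (convexHull ℝ (C ∩ (L : Set (EV n)))).extremePoints ℝ ⊆ C ∩ (L : Set (EV n)) := by
  obtain ⟨b, hbL, -⟩ := hlat
  constructor
  · apply Set.Subset.antisymm
    · rintro z hz
      rw [Set.mem_add] at hz
      obtain ⟨u, hu, c, hc, rfl⟩ := hz
      have hmin : convexHull ℝ (C ∩ (L : Set (EV n))) ⊆
          {v : EV n | v + c ∈ convexHull ℝ (C ∩ (L : Set (EV n)))} := by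
        apply convexHull_min
        · intro p hp
          exact core_mem hopen hcone b hbL hp hc
        · have heq : {v : EV n | v + c ∈ convexHull ℝ (C ∩ (L : Set (EV n)))}
              = (fun v : EV n => v + c) ⁻¹' (convexHull ℝ (C ∩ (L : Set (EV n)))) := rfl
          rw [heq]
          exact (convex_convexHull ℝ _).translate_preimage_left c
      exact hmin hu
    · intro u hu
      have h0 : (0 : EV n) ∈ closure C := by
        obtain ⟨c0, hc0⟩ := hne
        rw [Metric.mem_closure_iff]
        intro δ hδ
        set t : ℝ := δ / (2 * (‖c0‖ + 1)) with ht
        have htpos : 0 < t := by positivity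
        refine ⟨t • c0, hcone.2 c0 hc0 t htpos, ?_⟩
        rw [dist_comm, dist_zero_right, norm_smul, Real.norm_eq_abs, abs_of_pos htpos, ht]
        rw [div_mul_eq_mul_div, div_lt_iff₀ (by positivity)]
        nlinarith [norm_nonneg c0]
      rw [Set.mem_add]
      exact ⟨u, hu, 0, h0, add_zero u⟩
  · exact extremePoints_convexHull_subset
end
end

section
/- Let Γ act on V = ℝⁿ through ρ: Γ → GL(V), leaving invariant a lattice L₀ ⊆ ℚⁿ and a nonempty open convex cone C ⊆ V. Let W := C̄ ∩ (−C̄) be the maximal vector subspace contained in C̄, suppose W is defined over ℚ, and let p: V → V/W be the quotient map. Suppose Π̃ ⊆ C̃₊ is a rational polyhedral cone such that Γ̃·Π̃ = C̃₊, for every γ ∈ Γ either the induced map γ̃ on V/W satisfies γ̃Π̃ = Π̃ or γ̃Π̃ ∩ Int(Π̃) = ∅, and γ̃Π̃ = Π̃ only when γ̃ is the identity on V/W. Let Π' ⊆ C₊ be a rational polyhedral cone with p(Π') = Π̃, and set Π := Π' + W. Then Π is a rational polyhedral cone contained in C₊ with Γ·Π = C₊; for each γ ∈ Γ either ρ(γ)Π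 ∩ Int(Π) = ∅ or ρ(γ)Π = Π; and ρ(γ)Π = Π if and only if γ acts trivially on V/W. -/
open Set Pointwise

noncomputable section

namespace Aux9

variable {n : ℕ}

lemma ratPts_zero : (0 : EV n) ∈ ratPts n := fun _ => ⟨0, by simp⟩

lemma ratPts_add {x y : EV n} (hx : x ∈ ratPts n) (hy : y ∈ ratPts n) : x + y ∈ ratPts n := by
  intro i
  obtain ⟨p, hp⟩ := hx i; obtain ⟨q, hq⟩ := hy i
  exact ⟨p + q, by simp [hp, hq]⟩

lemma ratPts_ratsmul (q : ℚ) {x : EV n} (hx : x ∈ ratPts n) : (q : ℝ) • x ∈ ratPts n := by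
  intro i
  obtain ⟨p, hp⟩ := hx i
  exact ⟨q * p, by simp [hp]⟩

lemma ratPts_neg {x : EV n} (hx : x ∈ ratPts n) : -x ∈ ratPts n := by
  have := ratPts_ratsmul (-1) hx
  simpa using this

lemma ratPts_sum {k : ℕ} {f : Fin k → EV n} (hf : ∀ i, f i ∈ ratPts n) :
    ∑ i, f i ∈ ratPts n := by
  classical
  refine Finset.sum_induction f (· ∈ ratPts n) (fun a b ha hb => ratPts_add ha hb)
    ratPts_zero (fun i _ => hf i)

/-- Every rational point is a rational combination of a rational basis. -/
lemma ratPts_rep (b : Module.Basis (Fin n) ℝ (EV n)) (hb : ∀ i, b i ∈ ratPts n)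
    {x : EV n} (hx : x ∈ ratPts n) :
    ∃ c : Fin n → ℚ, x = ∑ i, (c i : ℝ) • b i := by
  classical
  have hBq : ∀ i j : Fin n, ∃ q : ℚ, b j i = (q : ℝ) := fun i j => hb j i
  choose B hB using hBq
  set BQ : Matrix (Fin n) (Fin n) ℚ := Matrix.of B with hBQ
  have hdet : BQ.det ≠ 0 := by
    intro h0
    have hcast : ((Rat.castHom ℝ).mapMatrix BQ).det = 0 := by
      rw [← RingHom.map_det, h0, map_zero]
    obtain ⟨v, hv0, hv⟩ := (Matrix.exists_mulVec_eq_zero_iff.2 hcast)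
    have hsum : ∑ i, v i • b i = 0 := by
      funext j
      have := congrFun hv j
      simp only [Matrix.mulVec, dotProduct, RingHom.mapMatrix_apply, Matrix.map_apply,
        hBQ, Matrix.of_apply] at this
      simpa [Finset.sum_apply, hB, mul_comm] using this
    have := Fintype.linearIndependent_iff.1 b.linearIndependent v hsum
    exact hv0 (funext this)
  have hU : IsUnit BQ.det := isUnit_iff_ne_zero.2 hdet
  choose xq hxq using hx
  refine ⟨BQ⁻¹.mulVec xq, ?_⟩
  funext j
  have hmul : BQ * BQ⁻¹ = 1 := Matrix.mul_nonsing_inv _ hU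
  have key : (BQ.mulVec (BQ⁻¹.mulVec xq)) j = xq j := by
    rw [Matrix.mulVec_mulVec, hmul, Matrix.one_mulVec]
  calc x j = ((BQ.mulVec (BQ⁻¹.mulVec xq)) j : ℝ) := by rw [key, hxq]
    _ = ∑ i, ((BQ⁻¹.mulVec xq) i : ℝ) • b i j := by
        simp only [Matrix.mulVec, dotProduct]
        push_cast
        refine Finset.sum_congr rfl fun i _ => ?_
        rw [smul_eq_mul, hB j i, mul_comm]
        rfl
    _ = (∑ i, ((BQ⁻¹.mulVec xq) i : ℝ) • b i) j := by rw [Finset.sum_apply]; rfl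


/-- Membership in the intrinsic interior, via ambient open sets. -/
lemma mem_intrinsicInterior_iff {V : Type*} [AddCommGroup V] [Module ℝ V]
    [TopologicalSpace V] {s : Set V} {x : V} :
    x ∈ intrinsicInterior ℝ s ↔ x ∈ affineSpan ℝ s ∧
      ∃ U : Set V, IsOpen U ∧ x ∈ U ∧ U ∩ (affineSpan ℝ s : Set V) ⊆ s := by
  constructor
  · rintro ⟨y, hy, rfl⟩
    have h1 : ((↑) ⁻¹' s : Set <| affineSpan ℝ s) ∈ nhds y :=
      mem_interior_iff_mem_nhds.1 hy
    rw [nhds_induced] at h1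
    obtain ⟨t, ht, hts⟩ := h1
    obtain ⟨U, hUt, hUopen, hxU⟩ := mem_nhds_iff.1 ht
    refine ⟨y.2, U, hUopen, hxU, ?_⟩
    rintro z ⟨hzU, hzspan⟩
    exact hts (show (⟨z, hzspan⟩ : affineSpan ℝ s).val ∈ t from hUt hzU)
  · rintro ⟨hxspan, U, hUopen, hxU, hsub⟩
    refine ⟨⟨x, hxspan⟩, ?_, rfl⟩
    have hopen : IsOpen ((↑) ⁻¹' U : Set <| affineSpan ℝ s) :=
      hUopen.preimage continuous_subtype_val
    refine interior_maximal ?_ hopen hxU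
    rintro ⟨z, hzspan⟩ hz
    exact hsub ⟨hz, hzspan⟩


lemma affineSpan_preimage (W : Submodule ℝ (EV n)) (T : Set (EV n ⧸ W)) :
    (affineSpan ℝ (W.mkQ ⁻¹' T) : Set (EV n)) = W.mkQ ⁻¹' (affineSpan ℝ T : Set (EV n ⧸ W)) := by
  have hsurj : Function.Surjective W.mkQ := fun y => by
    obtain ⟨x, hx⟩ := Submodule.Quotient.mk_surjective W y
    exact ⟨x, hx⟩
  rcases T.eq_empty_or_nonempty with rfl | ⟨t0, ht0⟩
  · simp
  · obtain ⟨z, hz⟩ := hsurj t0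
    have hzpre : z ∈ W.mkQ ⁻¹' T := by rw [Set.mem_preimage, hz]; exact ht0
    apply subset_antisymm
    · have hle : affineSpan ℝ (W.mkQ ⁻¹' T) ≤ (affineSpan ℝ T).comap W.mkQ.toAffineMap := by
        rw [affineSpan_le]
        intro y hy
        show W.mkQ.toAffineMap y ∈ affineSpan ℝ T
        exact subset_affineSpan ℝ T hy
      intro y hy
      exact hle hy
    · intro x hx
      have hx' : W.mkQ x ∈ affineSpan ℝ T := hx
      have himg : affineSpan ℝ T = (affineSpan ℝ (W.mkQ ⁻¹' T)).map W.mkQ.toAffineMap := by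
        rw [AffineSubspace.map_span]
        congr 1
        rw [show (W.mkQ.toAffineMap '' (W.mkQ ⁻¹' T)) = W.mkQ '' (W.mkQ ⁻¹' T) from rfl,
          Set.image_preimage_eq T hsurj]
      rw [himg] at hx'
      obtain ⟨y, hy, hyx⟩ := hx'
      have hxy : x - y ∈ W := by
        have : W.mkQ y = W.mkQ x := hyx
        have h2 : y - x ∈ W := (Submodule.Quotient.eq W).1 this
        simpa using W.neg_mem h2
      have hz2 : z + (x - y) ∈ W.mkQ ⁻¹' T := by
        have h0 : W.mkQ (x - y) = 0 := by
          rwa [Submodule.mkQ_apply, Submodule.Quotient.mk_eq_zero]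
        rw [Set.mem_preimage, map_add, h0, add_zero, hz]
        exact ht0
      have hdir : x - y ∈ (affineSpan ℝ (W.mkQ ⁻¹' T)).direction := by
        have := AffineSubspace.vsub_mem_direction
          (subset_affineSpan ℝ _ hz2) (subset_affineSpan ℝ _ hzpre)
        simpa using this
      have : x ∈ affineSpan ℝ (W.mkQ ⁻¹' T) := by
        have := AffineSubspace.vadd_mem_of_mem_direction hdir hy
        simpa [vadd_eq_add, sub_add_cancel] using this
      exact this

lemma mkQ_mem_intrinsicInterior (W : Submodule ℝ (EV n)) (T : Set (EV n ⧸ W)) {x : EV n}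
    (hx : x ∈ intrinsicInterior ℝ (W.mkQ ⁻¹' T)) : W.mkQ x ∈ intrinsicInterior ℝ T := by
  rw [mem_intrinsicInterior_iff] at hx ⊢
  obtain ⟨hxspan, U, hUopen, hxU, hsub⟩ := hx
  have hspan := affineSpan_preimage W T
  have hxspan' : W.mkQ x ∈ affineSpan ℝ T := by
    have : x ∈ (affineSpan ℝ (W.mkQ ⁻¹' T) : Set (EV n)) := hxspan
    rw [hspan] at this
    exact this
  refine ⟨hxspan', W.mkQ '' U, (Submodule.isOpenMap_mkQ W) U hUopen, ⟨x, hxU, rfl⟩, ?_⟩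
  rintro a ⟨⟨u, hu, rfl⟩, haspan⟩
  have hu2 : u ∈ (affineSpan ℝ (W.mkQ ⁻¹' T) : Set (EV n)) := by
    rw [hspan]; exact haspan
  exact hsub ⟨hu, hu2⟩

end Aux9

section ConeLemmas

variable {n : ℕ} {C : Set (EV n)}

lemma zero_mem_closure (hne : C.Nonempty) (hcone : IsConvexCone C) :
    (0 : EV n) ∈ closure C := by
  obtain ⟨x₀, hx₀⟩ := hne
  have hcont : Filter.Tendsto (fun t : ℝ => t • x₀) (nhdsWithin 0 (Set.Ioi 0)) (nhds 0) := by
    have h : Filter.Tendsto (fun t : ℝ => t • x₀) (nhds 0) (nhds ((0:ℝ) • x₀)) :=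
      (continuous_id.smul continuous_const).tendsto 0
    rw [zero_smul] at h
    exact h.mono_left nhdsWithin_le_nhds
  refine mem_closure_of_tendsto hcont ?_
  filter_upwards [self_mem_nhdsWithin] with t ht
  exact hcone.2 x₀ hx₀ t ht

lemma closure_smul_mem (hcone : IsConvexCone C) {t : ℝ} (ht : 0 < t)
    {x : EV n} (hx : x ∈ closure C) : t • x ∈ closure C := by
  have hcont : Continuous fun y : EV n => t • y := continuous_const_smul t
  exact map_mem_closure hcont hx (fun y hy => hcone.2 y hy t ht)

lemma closure_add_mem (hne : C.Nonempty) (hcone : IsConvexCone C)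
    {x y : EV n} (hx : x ∈ closure C) (hy : y ∈ closure C) : x + y ∈ closure C := by
  rcases eq_or_ne (x + y) 0 with h | h
  · rw [h]; exact zero_mem_closure hne hcone
  · have hconv : Convex ℝ (closure C) := hcone.1.closure
    have hmid : (1/2 : ℝ) • x + (1/2 : ℝ) • y ∈ closure C :=
      hconv hx hy (by norm_num) (by norm_num) (by norm_num)
    have := closure_smul_mem hcone (t := 2) (by norm_num) hmid
    rwa [smul_add, smul_smul, smul_smul, show (2:ℝ) * (1/2) = 1 by norm_num,
      one_smul, one_smul] at this

lemma plusPart_zero_mem (hne : C.Nonempty) (hcone : IsConvexCone C) :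
    (0 : EV n) ∈ plusPart n C :=
  subset_convexHull ℝ _ ⟨zero_mem_closure hne hcone, Aux9.ratPts_zero⟩

lemma plusPart_add_mem (hne : C.Nonempty) (hcone : IsConvexCone C)
    {x y : EV n} (hx : x ∈ plusPart n C) (hy : y ∈ plusPart n C) :
    x + y ∈ plusPart n C := by
  have hSS : (closure C ∩ ratPts n) + (closure C ∩ ratPts n) ⊆ closure C ∩ ratPts n := by
    rintro z ⟨a, ha, b, hb, rfl⟩
    exact ⟨closure_add_mem hne hcone ha.1 hb.1, Aux9.ratPts_add ha.2 hb.2⟩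
  have : plusPart n C + plusPart n C ⊆ plusPart n C := by
    rw [plusPart, ← convexHull_add]
    exact convexHull_mono hSS
  exact this ⟨x, hx, y, hy, rfl⟩

lemma plusPart_gen_smul_mem (hne : C.Nonempty) (hcone : IsConvexCone C)
    {u : EV n} (hu : u ∈ closure C ∩ ratPts n) {t : ℝ} (ht : 0 ≤ t) :
    t • u ∈ plusPart n C := by
  rcases eq_or_lt_of_le ht with rfl | ht
  · rw [zero_smul]; exact plusPart_zero_mem hne hcone
  · obtain ⟨q, hq⟩ := exists_rat_gt t
    have hq0 : (0:ℝ) < q := lt_trans ht hq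
    have hqu : (q : ℝ) • u ∈ closure C ∩ ratPts n :=
      ⟨closure_smul_mem hcone hq0 hu.1, Aux9.ratPts_ratsmul q hu.2⟩
    have hconv : Convex ℝ (plusPart n C) := convex_convexHull ℝ _
    have hmem1 : (q : ℝ) • u ∈ plusPart n C := subset_convexHull ℝ _ hqu
    have hmem0 : (0 : EV n) ∈ plusPart n C := plusPart_zero_mem hne hcone
    have h1 : (0:ℝ) ≤ t / q := le_of_lt (div_pos ht hq0)
    have h2 : (0:ℝ) ≤ 1 - t / q := by
      rw [sub_nonneg]
      exact (div_le_one hq0).2 (le_of_lt hq)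
    have := hconv hmem1 hmem0 h1 h2 (by ring)
    rwa [smul_zero, add_zero, smul_smul, div_mul_cancel₀ t (ne_of_gt hq0)] at this

lemma plusPart_smul_mem (hne : C.Nonempty) (hcone : IsConvexCone C)
    {x : EV n} (hx : x ∈ plusPart n C) {t : ℝ} (ht : 0 ≤ t) :
    t • x ∈ plusPart n C := by
  rcases eq_or_lt_of_le ht with rfl | ht
  · rw [zero_smul]; exact plusPart_zero_mem hne hcone
  · have h1 : t • plusPart n C = convexHull ℝ (t • (closure C ∩ ratPts n)) := by
      rw [plusPart, convexHull_smul]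
    have h2 : t • (closure C ∩ ratPts n) ⊆ plusPart n C := by
      rintro z ⟨u, hu, rfl⟩
      exact plusPart_gen_smul_mem hne hcone hu (le_of_lt ht)
    have h3 : t • plusPart n C ⊆ plusPart n C := by
      rw [h1]
      calc convexHull ℝ (t • (closure C ∩ ratPts n)) ⊆ convexHull ℝ (plusPart n C) :=
            convexHull_mono h2
        _ = plusPart n C := (convex_convexHull ℝ _).convexHull_eq
    exact h3 ⟨x, hx, rfl⟩

end ConeLemmas

/-- With `W = C̄ ∩ (−C̄)` defined over `ℚ` and `p : V → V/W`, suppose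
`Π̃ ⊆ C̃₊` is a rational polyhedral fundamental domain for `C̃₊` under the induced action
of `Γ` on `V/W`. If `Π' ⊆ C₊` is a rational polyhedral cone with `p(Π') = Π̃`, then
`Π := Π' + W` is a rational polyhedral cone contained in `C₊` with `Γ·Π = C₊`, for each
`γ` either `ρ(γ)Π ∩ Int(Π) = ∅` or `ρ(γ)Π = Π`, and `ρ(γ)Π = Π` iff `γ` acts trivially
on `V/W`. -/


theorem statement9 {n : ℕ} {Γ : Type*} [Group Γ]
    (ρ : Γ →* (EV n ≃ₗ[ℝ] EV n))
    (L₀ : AddSubgroup (EV n)) (hL₀lat : IsLattice n L₀)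
    (hL₀Q : (L₀ : Set (EV n)) ⊆ ratPts n)
    (hL₀inv : ∀ γ : Γ, (ρ γ) '' (L₀ : Set (EV n)) = (L₀ : Set (EV n)))
    (C : Set (EV n)) (hne : C.Nonempty) (hopen : IsOpen C) (hcone : IsConvexCone C)
    (hCinv : ∀ γ : Γ, (ρ γ) '' C = C)
    (W : Submodule ℝ (EV n)) (hW : (W : Set (EV n)) = closure C ∩ (-(closure C)))
    (hWQ : Submodule.span ℝ ((W : Set (EV n)) ∩ ratPts n) = W)
    (Pt : Set (EV n ⧸ W)) (hPtrat : IsRatPolyCone (W.mkQ '' ratPts n) Pt)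
    (hPtsub : Pt ⊆ convexHull ℝ (closure (W.mkQ '' C) ∩ (W.mkQ '' ratPts n)))
    -- `Γ̃·Π̃ = C̃₊`
    (hPtfull : {x : EV n ⧸ W | ∃ γ : Γ, ∃ u : EV n, W.mkQ u ∈ Pt ∧ x = W.mkQ ((ρ γ) u)}
      = convexHull ℝ (closure (W.mkQ '' C) ∩ (W.mkQ '' ratPts n)))
    -- for each `γ`, either `γ̃Π̃ = Π̃` or `γ̃Π̃ ∩ Int(Π̃) = ∅`
    (hPtdich : ∀ γ : Γ,
      {x : EV n ⧸ W | ∃ u : EV n, W.mkQ u ∈ Pt ∧ x = W.mkQ ((ρ γ) u)} = Pt ∨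
      {x : EV n ⧸ W | ∃ u : EV n, W.mkQ u ∈ Pt ∧ x = W.mkQ ((ρ γ) u)}
        ∩ intrinsicInterior ℝ Pt = ∅)
    -- `γ̃Π̃ = Π̃` only when `γ̃` is the identity on `V/W`
    (hPtfree : ∀ γ : Γ,
      {x : EV n ⧸ W | ∃ u : EV n, W.mkQ u ∈ Pt ∧ x = W.mkQ ((ρ γ) u)} = Pt →
      ∀ v : EV n, (ρ γ) v - v ∈ W)
    (P' : Set (EV n)) (hP'rat : IsRatPolyCone (ratPts n) P')
    (hP'sub : P' ⊆ plusPart n C) (hP'proj : W.mkQ '' P' = Pt) :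
    IsRatPolyCone (ratPts n) (P' + (W : Set (EV n))) ∧
    P' + (W : Set (EV n)) ⊆ plusPart n C ∧
    (⋃ γ : Γ, (ρ γ) '' (P' + (W : Set (EV n)))) = plusPart n C ∧
    (∀ γ : Γ, ((ρ γ) '' (P' + (W : Set (EV n)))) ∩
        intrinsicInterior ℝ (P' + (W : Set (EV n))) = ∅ ∨
      (ρ γ) '' (P' + (W : Set (EV n))) = P' + (W : Set (EV n))) ∧
    (∀ γ : Γ, (ρ γ) '' (P' + (W : Set (EV n))) = P' + (W : Set (EV n)) ↔
      ∀ v : EV n, (ρ γ) v - v ∈ W) := by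
  classical
  obtain ⟨b, hbL, -⟩ := hL₀lat
  have hbQ : ∀ i, b i ∈ ratPts n := fun i => hL₀Q (hbL i)
  have hρcancel : ∀ (γ : Γ) (x : EV n), ρ γ (ρ γ⁻¹ x) = x := by
    intro γ x
    have h : ρ γ⁻¹ = (ρ γ).symm := by rw [map_inv]; rfl
    rw [h]; exact (ρ γ).apply_symm_apply x
  have hratP : ∀ (γ : Γ) {x : EV n}, x ∈ ratPts n → ρ γ x ∈ ratPts n := by
    intro γ x hx
    obtain ⟨c, rfl⟩ := Aux9.ratPts_rep b hbQ hx
    rw [map_sum]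
    refine Aux9.ratPts_sum fun i => ?_
    rw [map_smul]
    refine Aux9.ratPts_ratsmul _ (hL₀Q ?_)
    have h1 : ρ γ (b i) ∈ ρ γ '' (L₀ : Set (EV n)) := ⟨b i, hbL i, rfl⟩
    rw [hL₀inv γ] at h1; exact h1
  have hclinv : ∀ γ : Γ, ρ γ '' closure C = closure C := by
    intro γ
    have h := ((ρ γ).toContinuousLinearEquiv.toHomeomorph).image_closure C
    have hcoe : ⇑((ρ γ).toContinuousLinearEquiv.toHomeomorph) = ⇑(ρ γ) := rfl
    rw [hcoe] at h
    rw [h, hCinv γ]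
  have hclmem : ∀ γ : Γ, ∀ x ∈ closure C, ρ γ x ∈ closure C := by
    intro γ x hx
    rw [← hclinv γ]; exact ⟨x, hx, rfl⟩
  have hWmem : ∀ γ : Γ, ∀ w ∈ W, ρ γ w ∈ W := by
    intro γ w hw
    have hw' : w ∈ closure C ∩ (-(closure C)) := by
      rw [← hW]; exact hw
    have h1 : ρ γ w ∈ closure C := hclmem γ w hw'.1
    have h2 : -(ρ γ w) ∈ closure C := by
      rw [← map_neg]
      exact hclmem γ (-w) (Set.mem_neg.1 hw'.2)
    have : ρ γ w ∈ (W : Set (EV n)) := by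
      rw [hW]; exact ⟨h1, Set.mem_neg.2 h2⟩
    exact this
  have hplusinv : ∀ γ : Γ, ρ γ '' plusPart n C ⊆ plusPart n C := by
    intro γ
    have himg := LinearMap.image_convexHull ((ρ γ : EV n →ₗ[ℝ] EV n)) (closure C ∩ ratPts n)
    simp only [LinearEquiv.coe_coe] at himg
    rw [plusPart, himg]
    apply convexHull_mono
    rintro x ⟨u, ⟨hu1, hu2⟩, rfl⟩
    exact ⟨hclmem γ u hu1, hratP γ hu2⟩
  -- rational spanning data for W
  obtain ⟨bs, hbs_sub, hbs_span, hbs_li⟩ :=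
    exists_linearIndependent ℝ ((W : Set (EV n)) ∩ ratPts n)
  have hbs_spanW : Submodule.span ℝ bs = W := by rw [hbs_span, hWQ]
  have hbs_fin : bs.Finite := hbs_li.setFinite
  letI := hbs_fin.fintype
  set m := Fintype.card ↥bs with hm
  set vW : Fin m → EV n := fun j => ((Fintype.equivFin ↥bs).symm j : EV n) with hvW
  have hvW_range : Set.range vW = bs := by
    rw [show vW = (↑) ∘ (Fintype.equivFin ↥bs).symm from rfl, Set.range_comp,
      Equiv.range_eq_univ, Set.image_univ, Subtype.range_coe]
  have hvW_mem : ∀ j, vW j ∈ (W : Set (EV n)) ∩ ratPts n := fun j =>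
    hbs_sub ((Fintype.equivFin ↥bs).symm j).2
  have hvW_W : ∀ j, vW j ∈ W := fun j => (hvW_mem j).1
  have hWspan : ∀ w ∈ W, ∃ d : Fin m → ℝ, ∑ i, d i • vW i = w := by
    intro w hw
    have h1 : w ∈ Submodule.span ℝ (Set.range vW) := by
      rw [hvW_range, hbs_spanW]; exact hw
    exact (Submodule.mem_span_range_iff_exists_fun ℝ).1 h1
  have hWsubcl : (W : Set (EV n)) ⊆ closure C := by
    rw [hW]; exact Set.inter_subset_left
  have hWsub_plus : (W : Set (EV n)) ⊆ plusPart n C := by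
    intro w hw
    obtain ⟨d, rfl⟩ := hWspan w hw
    refine Finset.sum_induction _ (· ∈ plusPart n C)
      (fun a b' ha hb' => plusPart_add_mem hne hcone ha hb')
      (plusPart_zero_mem hne hcone) (fun i _ => ?_)
    rcases le_or_gt 0 (d i) with hd | hd
    · exact plusPart_gen_smul_mem hne hcone
        ⟨hWsubcl (hvW_mem i).1, (hvW_mem i).2⟩ hd
    · have hneg : -vW i ∈ closure C ∩ ratPts n := by
        refine ⟨hWsubcl ?_, Aux9.ratPts_neg (hvW_mem i).2⟩
        exact W.neg_mem (hvW_W i)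
      have := plusPart_gen_smul_mem hne hcone hneg (le_of_lt (neg_pos.2 hd))
      rwa [smul_neg, neg_smul, neg_neg] at this
  set Pi := P' + (W : Set (EV n)) with hPidef
  have hsurj : Function.Surjective ⇑W.mkQ := fun y => by
    obtain ⟨x, hx⟩ := Submodule.Quotient.mk_surjective W y
    exact ⟨x, hx⟩
  have hmkQ_zero : ∀ w ∈ W, W.mkQ w = 0 := by
    intro w hw
    rwa [Submodule.mkQ_apply, Submodule.Quotient.mk_eq_zero]
  have hPisub : Pi ⊆ plusPart n C := by
    rintro x ⟨p, hp, w, hw, rfl⟩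
    exact plusPart_add_mem hne hcone (hP'sub hp) (hWsub_plus hw)
  have hPiPre : Pi = W.mkQ ⁻¹' Pt := by
    apply subset_antisymm
    · rintro x ⟨p, hp, w, hw, rfl⟩
      rw [Set.mem_preimage, map_add, hmkQ_zero w hw, add_zero, ← hP'proj]
      exact ⟨p, hp, rfl⟩
    · intro x hx
      rw [Set.mem_preimage, ← hP'proj] at hx
      obtain ⟨p, hp, hpx⟩ := hx
      have hxp : x - p ∈ W := by
        have h1 : p - x ∈ W := (Submodule.Quotient.eq W).1 hpx
        have := W.neg_mem h1
        rwa [neg_sub] at this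
      exact ⟨p, hp, x - p, hxp, add_sub_cancel p x⟩
  have hAγ : ∀ γ : Γ, ρ γ '' Pi
      = W.mkQ ⁻¹' {x : EV n ⧸ W | ∃ u : EV n, W.mkQ u ∈ Pt ∧ x = W.mkQ ((ρ γ) u)} := by
    intro γ
    rw [hPiPre]
    apply subset_antisymm
    · rintro x ⟨u, hu, rfl⟩
      exact ⟨u, hu, rfl⟩
    · intro x hx
      obtain ⟨u, huPt, hux⟩ := hx
      have hw : x - ρ γ u ∈ W := (Submodule.Quotient.eq W).1 hux
      refine ⟨u + ρ γ⁻¹ (x - ρ γ u), ?_, ?_⟩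
      · rw [Set.mem_preimage, map_add, hmkQ_zero _ (hWmem γ⁻¹ _ hw), add_zero]
        exact huPt
      · rw [map_add, hρcancel γ _, add_sub_cancel]
  have hAinv_eq : ∀ γ : Γ, ρ γ '' Pi = Pi ↔
      {x : EV n ⧸ W | ∃ u : EV n, W.mkQ u ∈ Pt ∧ x = W.mkQ ((ρ γ) u)} = Pt := by
    intro γ
    rw [hAγ γ, hPiPre]
    constructor
    · intro h
      have h2 : W.mkQ '' (W.mkQ ⁻¹'
            {x : EV n ⧸ W | ∃ u : EV n, W.mkQ u ∈ Pt ∧ x = W.mkQ ((ρ γ) u)})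
          = W.mkQ '' (W.mkQ ⁻¹' Pt) := by rw [h]
      rwa [Set.image_preimage_eq _ hsurj, Set.image_preimage_eq _ hsurj] at h2
    · intro h; rw [h]
  have hQcont : Continuous ⇑W.mkQ := (Submodule.isOpenQuotientMap_mkQ W).continuous
  refine ⟨?_, hPisub, ?_, ?_, ?_⟩
  · -- rational polyhedrality
    obtain ⟨k, vgen, hvQ, hPeq⟩ := hP'rat
    refine ⟨k + (m + m), Fin.append vgen (Fin.append vW (fun j => -vW j)), ?_, ?_⟩
    · intro i
      refine Fin.addCases (fun i0 => ?_) (fun j => ?_) i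
      · rw [Fin.append_left]; exact hvQ i0
      · rw [Fin.append_right]
        refine Fin.addCases (fun j0 => ?_) (fun j0 => ?_) j
        · rw [Fin.append_left]; exact (hvW_mem j0).2
        · rw [Fin.append_right]; exact Aux9.ratPts_neg (hvW_mem j0).2
    · ext x
      constructor
      · rintro ⟨p, hp, w, hw, rfl⟩
        rw [hPeq] at hp
        obtain ⟨a, ha, rfl⟩ := hp
        obtain ⟨d, rfl⟩ := hWspan w hw
        refine ⟨Fin.append a (Fin.append (fun i => max (d i) 0) (fun i => max (-d i) 0)),
          ?_, ?_⟩
        · intro i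
          refine Fin.addCases (fun i0 => ?_) (fun j => ?_) i
          · rw [Fin.append_left]; exact ha i0
          · rw [Fin.append_right]
            refine Fin.addCases (fun j0 => ?_) (fun j0 => ?_) j
            · rw [Fin.append_left]; exact le_max_right _ _
            · rw [Fin.append_right]; exact le_max_right _ _
        · rw [Fin.sum_univ_add, Fin.sum_univ_add]
          simp only [Fin.append_left, Fin.append_right]
          congr 1
          rw [← Finset.sum_add_distrib]
          refine Finset.sum_congr rfl fun i _ => ?_
          rw [smul_neg, ← neg_smul, ← add_smul]
          congr 1
          have := max_zero_sub_max_neg_zero_eq_self (d i)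
          linarith
      · rintro ⟨c, hc, rfl⟩
        rw [Fin.sum_univ_add, Fin.sum_univ_add]
        simp only [Fin.append_left, Fin.append_right]
        refine ⟨_, ?_, _, ?_, rfl⟩
        · rw [hPeq]
          exact ⟨fun i => c (Fin.castAdd _ i), fun i => hc _, rfl⟩
        · refine W.add_mem (Submodule.sum_mem _ fun i _ => W.smul_mem _ (hvW_W i))
            (Submodule.sum_mem _ fun i _ => W.smul_mem _ (W.neg_mem (hvW_W i)))
  · -- Γ · Π = C₊
    apply subset_antisymm
    · refine Set.iUnion_subset fun γ => ?_
      exact (Set.image_mono hPisub).trans (hplusinv γ)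
    · intro x hx
      have hmk : W.mkQ x ∈ convexHull ℝ (closure (W.mkQ '' C) ∩ (W.mkQ '' ratPts n)) := by
        have h1 : W.mkQ '' plusPart n C
            ⊆ convexHull ℝ (closure (W.mkQ '' C) ∩ (W.mkQ '' ratPts n)) := by
          rw [plusPart, LinearMap.image_convexHull]
          apply convexHull_mono
          rintro y ⟨u, ⟨hu1, hu2⟩, rfl⟩
          exact ⟨image_closure_subset_closure_image hQcont ⟨u, hu1, rfl⟩, ⟨u, hu2, rfl⟩⟩
        exact h1 ⟨x, hx, rfl⟩
      rw [← hPtfull] at hmk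
      obtain ⟨γ, u, huPt, hux⟩ := hmk
      refine Set.mem_iUnion.2 ⟨γ, ?_⟩
      rw [hAγ γ]
      exact ⟨u, huPt, hux⟩
  · -- dichotomy
    intro γ
    rcases hPtdich γ with h | h
    · right
      rw [hAγ γ, h, ← hPiPre]
    · left
      apply Set.eq_empty_iff_forall_notMem.2
      rintro x ⟨hx1, hx2⟩
      have h1 : W.mkQ x ∈
          {x : EV n ⧸ W | ∃ u : EV n, W.mkQ u ∈ Pt ∧ x = W.mkQ ((ρ γ) u)} := by
        rw [hAγ γ] at hx1; exact hx1
      have h2 : W.mkQ x ∈ intrinsicInterior ℝ Pt := by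
        apply Aux9.mkQ_mem_intrinsicInterior W Pt
        rwa [hPiPre] at hx2
      exact Set.eq_empty_iff_forall_notMem.1 h _ ⟨h1, h2⟩
  · -- stabilizer
    intro γ
    constructor
    · intro h
      exact hPtfree γ ((hAinv_eq γ).1 h)
    · intro h
      rw [hAinv_eq γ]
      ext x
      constructor
      · rintro ⟨u, huPt, rfl⟩
        have heq : W.mkQ ((ρ γ) u) = W.mkQ u := (Submodule.Quotient.eq W).2 (h u)
        rw [heq]; exact huPt
      · intro hx
        obtain ⟨u, hu⟩ := hsurj x
        refine ⟨u, by rwa [hu], ?_⟩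
        have heq : W.mkQ ((ρ γ) u) = W.mkQ u := (Submodule.Quotient.eq W).2 (h u)
        rw [heq, hu]
end
end
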